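/- The Jacobson radical of B(Z_2) equals the two-sided ideal generated by the arrows ρ_1,…,ρ_7, and the semisimple quotient B(Z_2)/rad(B(Z_2)) is isomorphic to F_2 × F_2 × F_2 × F_2. -/

import Mathlib

open FreeAlgebra

/-- Generators of the path algebra `B(Z_2)`: four vertex idempotents and seven arrows. -/
inductive Gen2 : Type
  | e : Fin 4 → Gen2
  | r : Fin 7 → Gen2

/-- Sources of the arrows ρ₁,…,ρ₇. -/
def src2 : Fin 7 → Fin 4 := ![0, 1, 0, 1, 2, 3, 2]

/-- Targets of the arrows ρ₁,…,ρ₇. -/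
def tgt2 : Fin 7 → Fin 4 := ![1, 0, 1, 2, 3, 2, 3]

/-- Relations presenting `B(Z_2)` as a quotient of the free algebra: the path-algebra
relations for the quiver together with ρ₁ρ₄ = ρ₄ρ₇ = ρ₂ρ₁ = ρ₃ρ₂ = ρ₆ρ₅ = ρ₇ρ₆ = 0. -/
inductive Rel2 : FreeAlgebra (ZMod 2) Gen2 → FreeAlgebra (ZMod 2) Gen2 → Prop
  | idem (k : Fin 4) :
      Rel2 (ι (ZMod 2) (Gen2.e k) * ι (ZMod 2) (Gen2.e k)) (ι (ZMod 2) (Gen2.e k))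
  | orth (k l : Fin 4) (h : k ≠ l) : Rel2 (ι (ZMod 2) (Gen2.e k) * ι (ZMod 2) (Gen2.e l)) 0
  | sum : Rel2 (∑ k : Fin 4, ι (ZMod 2) (Gen2.e k)) 1
  | source (m : Fin 7) :
      Rel2 (ι (ZMod 2) (Gen2.e (src2 m)) * ι (ZMod 2) (Gen2.r m)) (ι (ZMod 2) (Gen2.r m))
  | target (m : Fin 7) :
      Rel2 (ι (ZMod 2) (Gen2.r m) * ι (ZMod 2) (Gen2.e (tgt2 m))) (ι (ZMod 2) (Gen2.r m))
  | rel14 : Rel2 (ι (ZMod 2) (Gen2.r 0) * ι (ZMod 2) (Gen2.r 3)) 0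
  | rel47 : Rel2 (ι (ZMod 2) (Gen2.r 3) * ι (ZMod 2) (Gen2.r 6)) 0
  | rel21 : Rel2 (ι (ZMod 2) (Gen2.r 1) * ι (ZMod 2) (Gen2.r 0)) 0
  | rel32 : Rel2 (ι (ZMod 2) (Gen2.r 2) * ι (ZMod 2) (Gen2.r 1)) 0
  | rel65 : Rel2 (ι (ZMod 2) (Gen2.r 5) * ι (ZMod 2) (Gen2.r 4)) 0
  | rel76 : Rel2 (ι (ZMod 2) (Gen2.r 6) * ι (ZMod 2) (Gen2.r 5)) 0

/-- The genus-2 bordered algebra `B(Z_2)`. -/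
abbrev B2 : Type := RingQuot Rel2

/-- The idempotents i₀, i₁, i₂, i₃ in `B(Z_2)`. -/
noncomputable def idem2 (k : Fin 4) : B2 :=
  RingQuot.mkAlgHom (ZMod 2) Rel2 (ι (ZMod 2) (Gen2.e k))

/-- The arrows ρ₁,…,ρ₇ in `B(Z_2)` (indexed by `Fin 7`). -/
noncomputable def arr2 (m : Fin 7) : B2 :=
  RingQuot.mkAlgHom (ZMod 2) Rel2 (ι (ZMod 2) (Gen2.r m))

/-- The arrow ρ_k in `B(Z_2)`, using 1-based indexing; `0` for out-of-range indices. -/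
noncomputable def ρ2 (k : ℕ) : B2 :=
  if h : 1 ≤ k ∧ k ≤ 7 then arr2 ⟨k - 1, by omega⟩ else 0

/-- The chord ρ_{[i,j]} = ρ_i ρ_{i+1} ⋯ ρ_j in `B(Z_2)` (1-based indices). -/
noncomputable def chord2 (i j : ℕ) : B2 :=
  ((List.range' i (j + 1 - i)).map ρ2).prod


/-- A two-sided ideal is nilpotent if for some n ≥ 1 every product of n of its
elements vanishes. -/
def IsNilpotentTwoSidedIdeal (I : TwoSidedIdeal B2) : Prop :=
  ∃ n : ℕ, 0 < n ∧ ∀ f : Fin n → B2, (∀ t, f t ∈ I) → (List.ofFn f).prod = 0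

/-! The classes of the vertex idempotents give a surjection `B(Z_2) → 𝔽₂⁴` that kills the
arrows. Its kernel is the ideal generated by the arrows because the idempotents together with the
nonzero paths ρ_i ρ_{i+1} ⋯ ρ_j span `B(Z_2)`: the relations force any product of arrows other
than a run of consecutive ones to vanish. For the same reason a product of eight elements of
that ideal is zero, as a run of consecutive arrows has length at most seven. The quotient
`𝔽₂⁴` is reduced, so every nilpotent ideal lies in the kernel. -/

theorem Submodule.mul_mem_span_of_mul_mem_insert_zero {R A : Type*} [CommSemiring R]
    [Semiring A] [Algebra R A] {s t u : Set A} (h : ∀ a ∈ s, ∀ b ∈ t, a * b ∈ insert 0 u)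
    {x y : A} (hx : x ∈ span R s) (hy : y ∈ span R t) : x * y ∈ span R u := by
  refine span_le.mpr (Set.mul_subset_iff.mpr fun a ha b hb => ?_)
    (span_mul_span R s t ▸ mul_mem_mul hx hy)
  rcases h a ha b hb with hab | hab
  · rw [hab]; exact zero_mem _
  · exact subset_span hab

lemma mkAlgHom_ι_mul_ι_eq_zero {a b : Gen2} (h : Rel2 (ι (ZMod 2) a * ι (ZMod 2) b) 0) :
    RingQuot.mkAlgHom (ZMod 2) Rel2 (ι (ZMod 2) a) * RingQuot.mkAlgHom (ZMod 2) Rel2 (ι (ZMod 2) b)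
      = 0 := by
  rw [← map_mul, RingQuot.mkAlgHom_rel _ h, map_zero]

lemma idem2_mul_self (k : Fin 4) : idem2 k * idem2 k = idem2 k := by
  rw [idem2, ← map_mul, RingQuot.mkAlgHom_rel _ (Rel2.idem k)]

lemma idem2_mul_idem2_of_ne {k l : Fin 4} (h : k ≠ l) : idem2 k * idem2 l = 0 :=
  mkAlgHom_ι_mul_ι_eq_zero (Rel2.orth k l h)

lemma sum_idem2 : ∑ k, idem2 k = 1 := by
  simp_rw [idem2, ← map_sum, RingQuot.mkAlgHom_rel _ Rel2.sum, map_one]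

lemma idem2_src2_mul_arr2 (m : Fin 7) : idem2 (src2 m) * arr2 m = arr2 m := by
  rw [idem2, arr2, ← map_mul, RingQuot.mkAlgHom_rel _ (Rel2.source m)]

lemma arr2_mul_idem2_tgt2 (m : Fin 7) : arr2 m * idem2 (tgt2 m) = arr2 m := by
  rw [idem2, arr2, ← map_mul, RingQuot.mkAlgHom_rel _ (Rel2.target m)]

lemma arr2_mul_arr2_of_tgt2_ne_src2 {a b : Fin 7} (h : tgt2 a ≠ src2 b) :
    arr2 a * arr2 b = 0 := by
  rw [← arr2_mul_idem2_tgt2 a, ← idem2_src2_mul_arr2 b, mul_assoc, ← mul_assoc (idem2 _),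
    idem2_mul_idem2_of_ne h, zero_mul, mul_zero]

-- A composable pair `ρ_a ρ_b` with `b ≠ a + 1` is one of the six defining monomial relations.
lemma arr2_mul_arr2_of_ne_succ {a b : Fin 7} (h : (b : ℕ) ≠ a + 1) : arr2 a * arr2 b = 0 := by
  fin_cases a <;> fin_cases b <;> simp only at h <;>
    first
      | exact absurd rfl h
      | exact arr2_mul_arr2_of_tgt2_ne_src2 (by decide)
      | exact mkAlgHom_ι_mul_ι_eq_zero (by constructor)

lemma ρ2_mul_ρ2_of_ne_succ {a b : ℕ} (h : b ≠ a + 1) : ρ2 a * ρ2 b = 0 := by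
  unfold ρ2
  split_ifs with ha hb hb
  · exact arr2_mul_arr2_of_ne_succ (by simp only; omega)
  all_goals simp

lemma idem2_mul_ρ2 (k : Fin 4) (i : ℕ) : idem2 k * ρ2 i = ρ2 i ∨ idem2 k * ρ2 i = 0 := by
  unfold ρ2
  split_ifs with hi
  · by_cases hk : k = src2 ⟨i - 1, by omega⟩
    · left; rw [hk, idem2_src2_mul_arr2]
    · right; rw [← idem2_src2_mul_arr2, ← mul_assoc, idem2_mul_idem2_of_ne hk, zero_mul]
  · simp

lemma ρ2_mul_idem2 (k : Fin 4) (i : ℕ) : ρ2 i * idem2 k = ρ2 i ∨ ρ2 i * idem2 k = 0 := by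
  unfold ρ2
  split_ifs with hi
  · by_cases hk : tgt2 ⟨i - 1, by omega⟩ = k
    · left; rw [← hk, arr2_mul_idem2_tgt2]
    · right; rw [← arr2_mul_idem2_tgt2, mul_assoc, idem2_mul_idem2_of_ne hk, mul_zero]
  · simp

lemma chord2_self (i : ℕ) : chord2 i i = ρ2 i := by
  simp [chord2]

lemma arr2_eq_chord2 (m : Fin 7) : arr2 m = chord2 (m + 1) (m + 1) := by
  rw [chord2_self, ρ2, dif_pos (by omega)]
  rfl

lemma chord2_mul_chord2 {i j k : ℕ} (hij : i ≤ j + 1) (hjk : j ≤ k) :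
    chord2 i j * chord2 (j + 1) k = chord2 i k := by
  have hrange := List.range'_append_1 (s := i) (m := j + 1 - i) (n := k - j)
  rw [show i + (j + 1 - i) = j + 1 by omega, show j + 1 - i + (k - j) = k + 1 - i by omega]
    at hrange
  rw [chord2, chord2, chord2, ← List.prod_append, ← List.map_append,
    show k + 1 - (j + 1) = k - j by omega, hrange]

lemma chord2_eq_ρ2_mul {i j : ℕ} (h : i ≤ j) : chord2 i j = ρ2 i * chord2 (i + 1) j := by
  rw [← chord2_self, chord2_mul_chord2 (by omega) h]

lemma chord2_eq_mul_ρ2 {i j : ℕ} (hi : 1 ≤ i) (h : i ≤ j) :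
    chord2 i j = chord2 i (j - 1) * ρ2 j := by
  rw [← chord2_self, ← chord2_mul_chord2 (by omega) (by omega : j - 1 ≤ j),
    Nat.sub_add_cancel (by omega)]

lemma chord2_mul_chord2_of_ne {i j i' j' : ℕ} (hi : 1 ≤ i) (hij : i ≤ j) (hij' : i' ≤ j')
    (h : i' ≠ j + 1) : chord2 i j * chord2 i' j' = 0 := by
  rw [chord2_eq_mul_ρ2 hi hij, chord2_eq_ρ2_mul hij', mul_assoc, ← mul_assoc (ρ2 j),
    ρ2_mul_ρ2_of_ne_succ h, zero_mul, mul_zero]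

lemma idem2_mul_chord2 (k : Fin 4) {i j : ℕ} (h : i ≤ j) :
    idem2 k * chord2 i j = chord2 i j ∨ idem2 k * chord2 i j = 0 := by
  rw [chord2_eq_ρ2_mul h, ← mul_assoc]
  rcases idem2_mul_ρ2 k i with he | he <;> rw [he] <;> simp

lemma chord2_mul_idem2 (k : Fin 4) {i j : ℕ} (hi : 1 ≤ i) (h : i ≤ j) :
    chord2 i j * idem2 k = chord2 i j ∨ chord2 i j * idem2 k = 0 := by
  rw [chord2_eq_mul_ρ2 hi h, mul_assoc]
  rcases ρ2_mul_idem2 k j with he | he <;> rw [he] <;> simp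

/-- Paths `ρ_{[i,j]}`, of length `j + 1 - i ≥ n`. -/
def longChords (n : ℕ) : Set B2 :=
  {x | ∃ i j, 1 ≤ i ∧ i + n ≤ j + 1 ∧ j ≤ 7 ∧ x = chord2 i j}

lemma longChords_anti {m n : ℕ} (h : m ≤ n) : longChords n ⊆ longChords m := by
  rintro _ ⟨i, j, hi, hij, hj, rfl⟩
  exact ⟨i, j, hi, by omega, hj, rfl⟩

lemma longChords_eight : longChords 8 = ∅ := by
  ext x
  simp only [longChords, Set.mem_ofPred_eq, Set.mem_empty_iff_false, iff_false]
  omega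

lemma arr2_mem_longChords_one (m : Fin 7) : arr2 m ∈ longChords 1 :=
  ⟨m + 1, m + 1, by omega, by omega, by omega, arr2_eq_chord2 m⟩

lemma mul_mem_insert_zero_longChords {m n : ℕ} (hm : 1 ≤ m) (hn : 1 ≤ n) {x y : B2}
    (hx : x ∈ longChords m) (hy : y ∈ longChords n) : x * y ∈ insert 0 (longChords (m + n)) := by
  obtain ⟨i, j, hi, hij, hj, rfl⟩ := hx
  obtain ⟨i', j', hi', hij', hj', rfl⟩ := hy
  by_cases hconsec : i' = j + 1
  · subst hconsec
    exact Or.inr ⟨i, j', hi, by omega, hj', chord2_mul_chord2 (by omega) (by omega)⟩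
  · exact Or.inl (chord2_mul_chord2_of_ne hi (by omega) (by omega) hconsec)

lemma idem2_mul_mem_insert_zero_longChords (k : Fin 4) {n : ℕ} (hn : 1 ≤ n) {x : B2}
    (hx : x ∈ longChords n) : idem2 k * x ∈ insert 0 (longChords n) := by
  obtain ⟨i, j, -, hij, -, rfl⟩ := id hx
  rcases idem2_mul_chord2 k (by omega : i ≤ j) with h | h <;> rw [h]
  exacts [Or.inr hx, Or.inl rfl]

lemma mul_idem2_mem_insert_zero_longChords (k : Fin 4) {n : ℕ} (hn : 1 ≤ n) {x : B2}
    (hx : x ∈ longChords n) : x * idem2 k ∈ insert 0 (longChords n) := by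
  obtain ⟨i, j, hi, hij, -, rfl⟩ := id hx
  rcases chord2_mul_idem2 k hi (by omega : i ≤ j) with h | h <;> rw [h]
  exacts [Or.inr hx, Or.inl rfl]

def pathSet : Set B2 := Set.range idem2 ∪ longChords 1

lemma mul_mem_insert_zero_of_mem_pathSet_of_mem_longChords {x y : B2} (hx : x ∈ pathSet)
    (hy : y ∈ longChords 1) : x * y ∈ insert 0 (longChords 1) := by
  rcases hx with ⟨k, rfl⟩ | hx
  · exact idem2_mul_mem_insert_zero_longChords k le_rfl hy
  · exact Set.insert_subset_insert (longChords_anti (by omega))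
      (mul_mem_insert_zero_longChords le_rfl le_rfl hx hy)

lemma mul_mem_insert_zero_of_mem_longChords_of_mem_pathSet {x y : B2} (hx : x ∈ longChords 1)
    (hy : y ∈ pathSet) : x * y ∈ insert 0 (longChords 1) := by
  rcases hy with ⟨k, rfl⟩ | hy
  · exact mul_idem2_mem_insert_zero_longChords k le_rfl hx
  · exact Set.insert_subset_insert (longChords_anti (by omega))
      (mul_mem_insert_zero_longChords le_rfl le_rfl hx hy)

lemma mul_mem_insert_zero_pathSet {x y : B2} (hx : x ∈ pathSet) (hy : y ∈ pathSet) :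
    x * y ∈ insert 0 pathSet := by
  have hsub : insert 0 (longChords 1) ⊆ insert 0 pathSet :=
    Set.insert_subset_insert Set.subset_union_right
  rcases hx with ⟨k, rfl⟩ | hx
  · rcases hy with ⟨l, rfl⟩ | hy
    · by_cases hkl : k = l
      · subst hkl; rw [idem2_mul_self]; exact Or.inr (Or.inl ⟨k, rfl⟩)
      · exact Or.inl (idem2_mul_idem2_of_ne hkl)
    · exact hsub (idem2_mul_mem_insert_zero_longChords k le_rfl hy)
  · exact hsub (mul_mem_insert_zero_of_mem_longChords_of_mem_pathSet hx hy)

lemma mem_span_pathSet (x : B2) : x ∈ Submodule.span (ZMod 2) pathSet := by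
  obtain ⟨x, rfl⟩ := RingQuot.mkAlgHom_surjective (ZMod 2) Rel2 x
  induction x using FreeAlgebra.induction with
  | grade0 r =>
    rw [AlgHom.commutes, Algebra.algebraMap_eq_smul_one, ← sum_idem2]
    exact Submodule.smul_mem _ r
      (Submodule.sum_mem _ fun k _ => Submodule.subset_span (Or.inl ⟨k, rfl⟩))
  | grade1 g =>
    cases g with
    | e k => exact Submodule.subset_span (Or.inl ⟨k, rfl⟩)
    | r m => exact Submodule.subset_span (Or.inr (arr2_mem_longChords_one m))
  | mul a b ha hb =>
    rw [map_mul]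
    exact Submodule.mul_mem_span_of_mul_mem_insert_zero
      (fun _ hx _ hy => mul_mem_insert_zero_pathSet hx hy) ha hb
  | add a b ha hb => rw [map_add]; exact add_mem ha hb

noncomputable def pathIdeal : TwoSidedIdeal B2 :=
  TwoSidedIdeal.mk' (Submodule.span (ZMod 2) (longChords 1)) (zero_mem _) add_mem neg_mem
    (fun {x _} hy => Submodule.mul_mem_span_of_mul_mem_insert_zero
      (fun _ ha _ hb => mul_mem_insert_zero_of_mem_pathSet_of_mem_longChords ha hb)
      (mem_span_pathSet x) hy)
    (fun {_ y} hx => Submodule.mul_mem_span_of_mul_mem_insert_zero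
      (fun _ ha _ hb => mul_mem_insert_zero_of_mem_longChords_of_mem_pathSet ha hb)
      hx (mem_span_pathSet y))

lemma mem_pathIdeal {x : B2} : x ∈ pathIdeal ↔ x ∈ Submodule.span (ZMod 2) (longChords 1) :=
  TwoSidedIdeal.mem_mk' ..

noncomputable abbrev arrowIdeal : TwoSidedIdeal B2 := TwoSidedIdeal.span (Set.range arr2)

lemma chord2_mem_arrowIdeal {i j : ℕ} (hi : 1 ≤ i) (hij : i ≤ j) (hj : j ≤ 7) :
    chord2 i j ∈ arrowIdeal := by
  rw [chord2_eq_ρ2_mul hij, ρ2, dif_pos ⟨hi, by omega⟩]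
  exact arrowIdeal.mul_mem_right _ _ (TwoSidedIdeal.subset_span ⟨_, rfl⟩)

lemma arrowIdeal_eq_pathIdeal : arrowIdeal = pathIdeal := by
  refine le_antisymm (TwoSidedIdeal.span_le.mpr ?_) fun x hx => ?_
  · rintro _ ⟨m, rfl⟩
    exact mem_pathIdeal.mpr (Submodule.subset_span (arr2_mem_longChords_one m))
  · refine (Submodule.span_le (p := arrowIdeal.asIdeal.restrictScalars (ZMod 2))).mpr ?_
      (mem_pathIdeal.mp hx)
    rintro _ ⟨i, j, hi, hij, hj, rfl⟩
    exact TwoSidedIdeal.mem_asIdeal.mpr (chord2_mem_arrowIdeal hi (by omega) hj)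

lemma list_prod_mem_span_longChords {n : ℕ} (f : Fin (n + 1) → B2)
    (hf : ∀ t, f t ∈ Submodule.span (ZMod 2) (longChords 1)) :
    (List.ofFn f).prod ∈ Submodule.span (ZMod 2) (longChords (n + 1)) := by
  induction n with
  | zero => simpa using hf 0
  | succ n ih =>
    rw [List.ofFn_succ, List.prod_cons]
    have h := Submodule.mul_mem_span_of_mul_mem_insert_zero
      (fun _ ha _ hb => mul_mem_insert_zero_longChords le_rfl (by omega) ha hb)
      (hf 0) (ih _ fun t => hf t.succ)
    rwa [add_comm 1] at h

lemma isNilpotentTwoSidedIdeal_arrowIdeal : IsNilpotentTwoSidedIdeal arrowIdeal := by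
  refine ⟨8, by norm_num, fun f hf => ?_⟩
  have h := list_prod_mem_span_longChords (n := 7) f fun t =>
    mem_pathIdeal.mp (arrowIdeal_eq_pathIdeal ▸ hf t)
  rwa [longChords_eight, Submodule.span_empty, Submodule.mem_bot] at h

local notation "𝔽₂⁴" => ZMod 2 × ZMod 2 × ZMod 2 × ZMod 2

def vertexVec : Fin 4 → 𝔽₂⁴ := ![(1, 0, 0, 0), (0, 1, 0, 0), (0, 0, 1, 0), (0, 0, 0, 1)]

def vertexVecOfGen : Gen2 → 𝔽₂⁴
  | .e k => vertexVec k
  | .r _ => 0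

lemma lift_vertexVecOfGen_rel {x y : FreeAlgebra (ZMod 2) Gen2} (h : Rel2 x y) :
    FreeAlgebra.lift (ZMod 2) vertexVecOfGen x = FreeAlgebra.lift (ZMod 2) vertexVecOfGen y := by
  cases h with
  | orth k l hkl =>
    simp only [map_mul, lift_ι_apply, vertexVecOfGen, map_zero]
    fin_cases k <;> fin_cases l <;> first | exact absurd rfl hkl | decide
  | sum => simp only [Fin.sum_univ_four, map_add, lift_ι_apply, vertexVecOfGen, map_one]; decide
  | idem k => simp only [map_mul, lift_ι_apply, vertexVecOfGen]; fin_cases k <;> decide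
  | _ => simp [vertexVecOfGen]

noncomputable def vertexProj : B2 →ₐ[ZMod 2] 𝔽₂⁴ :=
  RingQuot.liftAlgHom (ZMod 2) ⟨FreeAlgebra.lift (ZMod 2) vertexVecOfGen,
    fun _ _ h => lift_vertexVecOfGen_rel h⟩

lemma vertexProj_idem2 (k : Fin 4) : vertexProj (idem2 k) = vertexVec k := by
  rw [idem2, vertexProj, RingQuot.liftAlgHom_mkAlgHom_apply, lift_ι_apply, vertexVecOfGen]

lemma vertexProj_arr2 (m : Fin 7) : vertexProj (arr2 m) = 0 := by
  rw [arr2, vertexProj, RingQuot.liftAlgHom_mkAlgHom_apply, lift_ι_apply, vertexVecOfGen]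

lemma vertexProj_sum_smul_idem2 (c : Fin 4 → ZMod 2) :
    vertexProj (∑ k, c k • idem2 k) = (c 0, c 1, c 2, c 3) := by
  simp [vertexProj_idem2, Fin.sum_univ_four, vertexVec]

lemma vertexProj_surjective : Function.Surjective vertexProj := fun v =>
  ⟨_, vertexProj_sum_smul_idem2 ![v.1, v.2.1, v.2.2.1, v.2.2.2]⟩

lemma exists_sub_sum_smul_idem2_mem_arrowIdeal (x : B2) :
    ∃ c : Fin 4 → ZMod 2, x - ∑ k, c k • idem2 k ∈ arrowIdeal := by
  have hx := mem_span_pathSet x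
  rw [pathSet, Submodule.span_union] at hx
  obtain ⟨s, hs, p, hp, rfl⟩ := Submodule.mem_sup.mp hx
  obtain ⟨c, rfl⟩ := (Submodule.mem_span_range_iff_exists_fun (ZMod 2)).mp hs
  refine ⟨c, ?_⟩
  rw [add_sub_cancel_left, arrowIdeal_eq_pathIdeal, mem_pathIdeal]
  exact hp

lemma vertexProj_eq_zero_of_mem_arrowIdeal {x : B2} (hx : x ∈ arrowIdeal) :
    vertexProj x = 0 := by
  refine (TwoSidedIdeal.mem_ker _).mp (TwoSidedIdeal.mem_span_iff.mp hx _ ?_)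
  rintro _ ⟨m, rfl⟩
  exact (TwoSidedIdeal.mem_ker _).mpr (vertexProj_arr2 m)

lemma mem_arrowIdeal_iff {x : B2} : x ∈ arrowIdeal ↔ vertexProj x = 0 := by
  refine ⟨vertexProj_eq_zero_of_mem_arrowIdeal, fun hx => ?_⟩
  obtain ⟨c, hc⟩ := exists_sub_sum_smul_idem2_mem_arrowIdeal x
  have hc0 : c = 0 := by
    have h := vertexProj_eq_zero_of_mem_arrowIdeal hc
    rw [map_sub, hx, zero_sub, neg_eq_zero, vertexProj_sum_smul_idem2] at h
    simp only [Prod.mk_eq_zero] at h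
    ext k
    fin_cases k <;> simp [h]
  simpa [hc0] using hc

lemma le_arrowIdeal_of_isNilpotentTwoSidedIdeal {I : TwoSidedIdeal B2}
    (hI : IsNilpotentTwoSidedIdeal I) : I ≤ arrowIdeal := by
  obtain ⟨n, -, hprod⟩ := hI
  intro x hx
  have hxn : x ^ n = 0 := by
    simpa [List.ofFn_const, List.prod_replicate] using hprod (fun _ => x) fun _ => hx
  exact mem_arrowIdeal_iff.mpr (IsReduced.eq_zero _ ⟨n, by rw [← map_pow, hxn, map_zero]⟩)

lemma ringCon_arrowIdeal : arrowIdeal.ringCon = RingCon.ker vertexProj.toRingHom := by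
  ext x y
  rw [TwoSidedIdeal.rel_iff, mem_arrowIdeal_iff, RingCon.ker_apply, AlgHom.toRingHom_eq_coe,
    RingHom.coe_coe, map_sub, sub_eq_zero]

/-- the Jacobson radical of B(Z_2) — its largest nilpotent two-sided
ideal — equals the two-sided ideal generated by the arrows, and the semisimple quotient
is isomorphic to F_2 × F_2 × F_2 × F_2. -/
theorem stmt_17 :
    IsNilpotentTwoSidedIdeal (TwoSidedIdeal.span (Set.range arr2)) ∧
    (∀ I : TwoSidedIdeal B2, IsNilpotentTwoSidedIdeal I →
      ∀ x ∈ I, x ∈ TwoSidedIdeal.span (Set.range arr2)) ∧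
    Nonempty ((TwoSidedIdeal.span (Set.range arr2)).ringCon.Quotient ≃+*
      (ZMod 2 × ZMod 2 × ZMod 2 × ZMod 2)) := by
  refine ⟨isNilpotentTwoSidedIdeal_arrowIdeal,
    fun I hI x hx => le_arrowIdeal_of_isNilpotentTwoSidedIdeal hI hx, ?_⟩
  rw [ringCon_arrowIdeal]
  exact ⟨RingCon.quotientKerEquivOfSurjective _ vertexProj_surjective⟩
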